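/- Let 0 < θ < 1 and let c ≤ 0. Then ∫₀^∞ [ h (h − c) / (π θ^{3/2} (1 − θ)^{3/2}) ] · exp( − h²/(2θ) − (h − c)²/(2(1 − θ)) ) dh = (|c| (1 − θ) exp(−c²/(2(1 − θ)))) / (π √(θ(1 − θ))) − ((c² − 1) exp(−c²/2) · erfc( |c| √(θ/(2(1 − θ))) )) / √(2π). (Joint density of the argmax and the close for a nonpositive close.) -/

import Mathlib

/-!
Completing the square, `h²/(2θ) + (h - c)²/(2(1 - θ)) = c²/2 + (h - θc)²/(2θ(1 - θ))`, turns the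
integrand into `e^{-c²/2}` times a quadratic polynomial in `h - θc` times a Gaussian centred at
`θc`. A quadratic polynomial times `e^{-b t²}` has an explicit primitive built from `e^{-b t²}`
and `erf (√b t)`, so the integral over a half-line is a boundary term plus a multiple of `erfc`.
-/

open Real MeasureTheory Set

noncomputable def erf (z : ℝ) : ℝ := 2 / Real.sqrt π * ∫ u in (0:ℝ)..z, Real.exp (-u ^ 2)

noncomputable def erfc (z : ℝ) : ℝ := 1 - erf z

open Filter Topology

lemma hasDerivAt_erf (z : ℝ) : HasDerivAt erf (2 / √π * exp (-z ^ 2)) z :=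
  ((by fun_prop : Continuous fun u : ℝ ↦ exp (-u ^ 2)).integral_hasStrictDerivAt 0 z)
    |>.hasDerivAt.const_mul _

lemma tendsto_erf_atTop : Tendsto erf atTop (𝓝 1) := by
  have hint : IntegrableOn (fun u : ℝ ↦ exp (-u ^ 2)) (Ioi 0) := by
    simpa using (integrable_exp_neg_mul_sq one_pos).integrableOn
  have hlim := (intervalIntegral_tendsto_integral_Ioi 0 hint tendsto_id).const_mul (2 / √π)
  have hπ : √π ≠ 0 := by positivity
  rwa [show ∫ u in Ioi (0 : ℝ), exp (-u ^ 2) = √π / 2 by simpa using integral_gaussian_Ioi 1,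
    div_mul_div_comm, mul_comm, div_self (by positivity)] at hlim

noncomputable def quadraticGaussianPrimitive (b β γ t : ℝ) : ℝ :=
  -(t + β) / (2 * b) * exp (-b * t ^ 2) + (1 / (2 * b) + γ) * (√π / (2 * √b)) * erf (√b * t)

lemma hasDerivAt_quadraticGaussianPrimitive {b : ℝ} (hb : 0 < b) (β γ t : ℝ) :
    HasDerivAt (quadraticGaussianPrimitive b β γ) ((t ^ 2 + β * t + γ) * exp (-b * t ^ 2)) t := by
  have hsb : √b ≠ 0 := by positivity
  have hπ : √π ≠ 0 := by positivity
  have hexp : HasDerivAt (fun t ↦ exp (-b * t ^ 2)) (exp (-b * t ^ 2) * (-b * (2 * t))) t := by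
    simpa using ((hasDerivAt_pow 2 t).const_mul (-b)).exp
  have herf : HasDerivAt (fun t ↦ erf (√b * t)) (2 / √π * exp (-b * t ^ 2) * √b) t := by
    have := (hasDerivAt_erf (√b * t)).comp t ((hasDerivAt_id t).const_mul √b)
    rwa [mul_one, mul_pow, sq_sqrt hb.le, ← neg_mul] at this
  refine (((((hasDerivAt_id' t).add_const β).neg.div_const (2 * b)).mul hexp).add
    (herf.const_mul ((1 / (2 * b) + γ) * (√π / (2 * √b))))).congr_deriv ?_
  simp only [Pi.neg_apply]
  field_simp
  ring

lemma tendsto_quadraticGaussianPrimitive_atTop {b : ℝ} (hb : 0 < b) (β γ : ℝ) :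
    Tendsto (quadraticGaussianPrimitive b β γ) atTop
      (𝓝 ((1 / (2 * b) + γ) * (√π / (2 * √b)))) := by
  have hexp : Tendsto (fun t : ℝ ↦ exp (-b * t ^ 2)) atTop (𝓝 0) :=
    (exp_neg_mul_sq_isLittleO_exp_neg hb).trans_tendsto tendsto_exp_neg_atTop_nhds_zero
  have hmul : Tendsto (fun t : ℝ ↦ t * exp (-b * t ^ 2)) atTop (𝓝 0) := by
    have hhalf : Tendsto (fun t : ℝ ↦ exp (-(1 / 2) * t)) atTop (𝓝 0) :=
      tendsto_exp_atBot.comp (tendsto_id.const_mul_atTop_of_neg (by norm_num))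
    refine ((rpow_mul_exp_neg_mul_sq_isLittleO_exp_neg hb 1).trans_tendsto hhalf).congr' ?_
    filter_upwards [eventually_gt_atTop 0] with t ht
    rw [rpow_one]
  have herf : Tendsto (fun t ↦ erf (√b * t)) atTop (𝓝 1) :=
    tendsto_erf_atTop.comp (tendsto_id.const_mul_atTop (by positivity))
  convert ((hmul.add (hexp.const_mul β)).div_const (-(2 * b))).add
    (herf.const_mul ((1 / (2 * b) + γ) * (√π / (2 * √b)))) using 1
  · ext t
    simp only [quadraticGaussianPrimitive]
    ring
  · simp

lemma integrable_quadratic_mul_exp_neg_mul_sq {b : ℝ} (hb : 0 < b) (β γ : ℝ) :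
    Integrable fun t : ℝ ↦ (t ^ 2 + β * t + γ) * exp (-b * t ^ 2) := by
  have hsq : Integrable fun t : ℝ ↦ t ^ 2 * exp (-b * t ^ 2) := by
    simpa using integrable_rpow_mul_exp_neg_mul_sq hb (s := 2) (by norm_num)
  refine ((hsq.add ((integrable_mul_exp_neg_mul_sq hb).const_mul β)).add
    ((integrable_exp_neg_mul_sq hb).const_mul γ)).congr (.of_forall fun t ↦ ?_)
  simp only [Pi.add_apply]
  ring

lemma integral_Ioi_quadratic_mul_exp_neg_mul_sq {b : ℝ} (hb : 0 < b) (β γ a m : ℝ) :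
    ∫ h in Ioi a, ((h - m) ^ 2 + β * (h - m) + γ) * exp (-b * (h - m) ^ 2) =
      (a - m + β) / (2 * b) * exp (-b * (a - m) ^ 2) +
        (1 / (2 * b) + γ) * (√π / (2 * √b)) * erfc (√b * (a - m)) := by
  rw [integral_Ioi_of_hasDerivAt_of_tendsto'
    (fun h _ ↦ (hasDerivAt_quadraticGaussianPrimitive hb β γ (h - m)).comp_sub_const h m)
    ((integrable_quadratic_mul_exp_neg_mul_sq hb β γ).comp_sub_right m).integrableOn
    ((tendsto_quadraticGaussianPrimitive_atTop hb β γ).comp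
      (tendsto_atTop_add_const_right _ (-m) tendsto_id))]
  simp only [quadraticGaussianPrimitive, erfc]
  ring

lemma rpow_three_div_two {x : ℝ} (hx : 0 ≤ x) : x ^ ((3 : ℝ) / 2) = x * √x := by
  rw [sqrt_eq_rpow, ← rpow_one_add' hx (by norm_num)]
  norm_num

theorem stmt16 (θ c : ℝ) (hθ0 : 0 < θ) (hθ1 : θ < 1) (hc : c ≤ 0) :
    ∫ h in Ioi (0 : ℝ),
        h * (h - c) / (π * θ ^ ((3 : ℝ) / 2) * (1 - θ) ^ ((3 : ℝ) / 2)) *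
          Real.exp (-h ^ 2 / (2 * θ) - (h - c) ^ 2 / (2 * (1 - θ))) =
      |c| * (1 - θ) * Real.exp (-c ^ 2 / (2 * (1 - θ))) / (π * Real.sqrt (θ * (1 - θ))) -
        (c ^ 2 - 1) * Real.exp (-c ^ 2 / 2) *
            erfc (|c| * Real.sqrt (θ / (2 * (1 - θ)))) / Real.sqrt (2 * π) := by
  have h1θ : 0 < 1 - θ := sub_pos.2 hθ1
  set b := (2 * θ * (1 - θ))⁻¹ with hb_def
  set m := θ * c with hm_def
  have hintegrand (h : ℝ) :
      h * (h - c) / (π * θ ^ ((3 : ℝ) / 2) * (1 - θ) ^ ((3 : ℝ) / 2)) *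
          exp (-h ^ 2 / (2 * θ) - (h - c) ^ 2 / (2 * (1 - θ))) =
        exp (-c ^ 2 / 2) / (π * θ ^ ((3 : ℝ) / 2) * (1 - θ) ^ ((3 : ℝ) / 2)) *
          (((h - m) ^ 2 + (2 * m - c) * (h - m) + m * (m - c)) * exp (-b * (h - m) ^ 2)) := by
    rw [show -h ^ 2 / (2 * θ) - (h - c) ^ 2 / (2 * (1 - θ)) = -c ^ 2 / 2 + -b * (h - m) ^ 2 by
      rw [hb_def, hm_def]; field_simp; ring, exp_add]
    ring
  have hexp : exp (-c ^ 2 / 2) * exp (-b * (0 - m) ^ 2) = exp (-c ^ 2 / (2 * (1 - θ))) := by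
    rw [← exp_add]; congr 1; rw [hb_def, hm_def]; field_simp; ring
  have harg : √b * (0 - m) = |c| * √(θ / (2 * (1 - θ))) := by
    rw [abs_of_nonpos hc, show θ / (2 * (1 - θ)) = θ ^ 2 * b by rw [hb_def]; field_simp,
      sqrt_mul (sq_nonneg θ), sqrt_sq hθ0.le]
    ring
  have hscale : √π / (2 * √b) = √θ * √(1 - θ) * √(2 * π) / 2 := by
    rw [hb_def, sqrt_inv, sqrt_mul (by positivity) (1 - θ), sqrt_mul zero_le_two,
      sqrt_mul zero_le_two π]
    field_simp
  rw [setIntegral_congr_fun measurableSet_Ioi (fun h _ ↦ hintegrand h), integral_const_mul,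
    integral_Ioi_quadratic_mul_exp_neg_mul_sq (by positivity), harg, hscale, ← hexp,
    rpow_three_div_two hθ0.le, rpow_three_div_two h1θ.le, sqrt_mul hθ0.le, abs_of_nonpos hc]
  generalize erfc _ = E
  have h2π : √(2 * π) ^ 2 = 2 * π := sq_sqrt (by positivity)
  rw [hb_def, hm_def]
  field_simp
  linear_combination √θ * √(1 - θ) * (1 - θ) * (1 - c ^ 2) * E * h2π
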